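/- Let d ∈ ℕ, t_j, t_k ∈ [0,1)^d with w_∞(t_j − t_k) > 0, let λ, β, n ∈ ℕ with β even and n ≥ 2β²λ, set N = n+1, P = ⌊n/(λβ)⌋. Then the function H_j(t) := d_P^β(t − t_j) is a trigonometric polynomial of max-degree Pβ ≤ n/λ satisfying H_j(t_j) = 1 and |H_j(t)| ≤ (λβ/(2N·w_∞(t − t_j)))^β for t ≠ t_j. -/

import Mathlib

open Real Matrix MeasureTheory

/-- Wrap-around distance on the torus. -/
noncomputable def wrap (x : ℝ) : ℝ := ⨅ r : ℤ, |x + (r : ℝ)|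

/-- Modified Dirichlet kernel. -/
noncomputable def dirich (m : ℕ) (t : ℝ) : ℂ :=
  ((m : ℂ) + 1)⁻¹ * ∑ k ∈ Finset.range (m + 1), Complex.exp (2 * Real.pi * Complex.I * k * t)

/-!
With `z = exp(2πit)`, `(P+1) d_P(t) = (z^(P+1) - 1)/(z - 1)` is a geometric sum, so
`|d_P(t)| ≤ 1 / ((P+1) |sin(πt)|) ≤ 1 / (2(P+1) w(t))` by Jordan's inequality `|sin(πu)| ≥ 2|u|`
for `|u| ≤ 1/2`. In the product over the coordinates one factor attains the maximal distance
`w_∞` and the others have modulus at most `1`; since `N ≤ λβ(P+1)`, raising to the `β`-th power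
gives the decay bound. Expanding `d_P(t - s)` as a polynomial of degree `P` in `exp(2πit)` shows
that `d_P^β(· - t_j)` is a trigonometric polynomial of max-degree `Pβ`.
-/

open Polynomial

lemma wrap_eq_abs_sub_round (x : ℝ) : wrap x = |x - round x| := by
  unfold wrap
  refine le_antisymm ?_ (le_ciInf fun r => by simpa [sub_eq_add_neg] using round_le x (-r))
  have hbdd : BddBelow (Set.range fun r : ℤ => |x + (r : ℝ)|) :=
    ⟨0, by rintro y ⟨r, rfl⟩; exact abs_nonneg _⟩
  simpa [sub_eq_add_neg] using ciInf_le hbdd (-round x)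

lemma wrap_nonneg (x : ℝ) : 0 ≤ wrap x := by
  rw [wrap_eq_abs_sub_round]; exact abs_nonneg _

lemma two_mul_wrap_le_abs_sin (x : ℝ) : 2 * wrap x ≤ |sin (π * x)| := by
  set u := x - round x with hu_def
  have hu : |π * u| ≤ π / 2 := by
    rw [abs_mul, abs_of_pos pi_pos]
    nlinarith [abs_sub_round x, pi_pos]
  have hsin : |sin (π * x)| = |sin (π * u)| := by
    rw [show π * x = π * u + round x * π by simp only [u]; ring, sin_add_int_mul_pi, abs_mul,
      abs_zpow, abs_neg, abs_one, _root_.one_zpow, one_mul]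
  calc 2 * wrap x = 2 / π * |π * u| := by
        rw [wrap_eq_abs_sub_round, ← hu_def, abs_mul, abs_of_pos pi_pos]; field_simp
    _ ≤ |sin (π * x)| := hsin ▸ mul_abs_le_abs_sin hu

lemma norm_cexp_two_pi_I_mul (x : ℝ) : ‖Complex.exp (2 * π * Complex.I * x)‖ = 1 := by
  rw [show (2 * π * Complex.I * x : ℂ) = ((2 * π * x : ℝ) : ℂ) * Complex.I by push_cast; ring]
  exact Complex.norm_exp_ofReal_mul_I _

lemma four_mul_wrap_le_norm_cexp_sub_one (x : ℝ) :
    4 * wrap x ≤ ‖Complex.exp (2 * π * Complex.I * x) - 1‖ := by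
  rw [show (2 * π * Complex.I * x : ℂ) = Complex.I * ((2 * π * x : ℝ) : ℂ) by push_cast; ring,
    Complex.norm_exp_I_mul_ofReal_sub_one, show 2 * π * x / 2 = π * x by ring, norm_mul,
    Real.norm_eq_abs, Real.norm_eq_abs, abs_two]
  linarith [two_mul_wrap_le_abs_sin x]

lemma dirich_eq_geom_sum (m : ℕ) (t : ℝ) :
    dirich m t = ((m : ℂ) + 1)⁻¹ *
      ∑ k ∈ Finset.range (m + 1), Complex.exp (2 * π * Complex.I * t) ^ k := by
  unfold dirich
  congr 1
  refine Finset.sum_congr rfl fun k _ => ?_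
  rw [← Complex.exp_nat_mul]
  ring_nf

lemma norm_natCast_add_one_inv (m : ℕ) : ‖((m : ℂ) + 1)⁻¹‖ = ((m : ℝ) + 1)⁻¹ := by
  rw [norm_inv, ← Nat.cast_succ, Complex.norm_natCast, Nat.cast_succ]

lemma dirich_zero (m : ℕ) : dirich m 0 = 1 := by
  simp [dirich_eq_geom_sum, inv_mul_cancel₀ (Nat.cast_add_one_ne_zero (R := ℂ) m)]

lemma norm_dirich_le_one (m : ℕ) (t : ℝ) : ‖dirich m t‖ ≤ 1 := by
  rw [dirich_eq_geom_sum, norm_mul, norm_natCast_add_one_inv]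
  calc ((m : ℝ) + 1)⁻¹ * ‖∑ k ∈ Finset.range (m + 1), Complex.exp (2 * π * Complex.I * t) ^ k‖
      ≤ ((m : ℝ) + 1)⁻¹ * ∑ k ∈ Finset.range (m + 1), ‖Complex.exp (2 * π * Complex.I * t) ^ k‖ :=
        by gcongr; exact norm_sum_le _ _
    _ = 1 := by
        simp [norm_pow, norm_cexp_two_pi_I_mul,
          inv_mul_cancel₀ (Nat.cast_add_one_ne_zero (R := ℝ) m)]

lemma norm_dirich_le_inv_wrap (m : ℕ) {t : ℝ} (ht : 0 < wrap t) :
    ‖dirich m t‖ ≤ (((m : ℝ) + 1) * (2 * wrap t))⁻¹ := by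
  set z := Complex.exp (2 * π * Complex.I * t)
  have hden : 4 * wrap t ≤ ‖z - 1‖ := four_mul_wrap_le_norm_cexp_sub_one t
  have hz1 : z ≠ 1 := fun h => by rw [h, sub_self, norm_zero] at hden; linarith
  have hnum : ‖z ^ (m + 1) - 1‖ ≤ 2 := by
    calc ‖z ^ (m + 1) - 1‖ ≤ ‖z ^ (m + 1)‖ + ‖(1 : ℂ)‖ := norm_sub_le _ _
      _ = 2 := by rw [norm_pow, norm_cexp_two_pi_I_mul]; norm_num
  rw [dirich_eq_geom_sum, geom_sum_eq hz1, norm_mul, norm_div, norm_natCast_add_one_inv,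
    mul_inv]
  gcongr
  calc ‖z ^ (m + 1) - 1‖ / ‖z - 1‖ ≤ 2 / (4 * wrap t) :=
        div_le_div₀ zero_le_two hnum (by positivity) hden
    _ = (2 * wrap t)⁻¹ := by field_simp; ring

lemma exists_eq_iSup_of_pos {ι : Type*} [Finite ι] {f : ι → ℝ} (h : 0 < ⨆ i, f i) :
    ∃ i, f i = ⨆ i, f i := by
  cases isEmpty_or_nonempty ι
  · simp at h
  · exact exists_eq_ciSup_of_finite

lemma norm_prod_dirich_le {ι : Type*} [Fintype ι] (m : ℕ) {t : ι → ℝ}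
    (ht : 0 < ⨆ ℓ, wrap (t ℓ)) :
    ‖∏ ℓ, dirich m (t ℓ)‖ ≤ (((m : ℝ) + 1) * (2 * ⨆ ℓ, wrap (t ℓ)))⁻¹ := by
  classical
  obtain ⟨ℓ₀, hℓ₀⟩ := exists_eq_iSup_of_pos ht
  rw [norm_prod, ← Finset.mul_prod_erase _ _ (Finset.mem_univ ℓ₀), ← hℓ₀]
  calc ‖dirich m (t ℓ₀)‖ * ∏ ℓ ∈ Finset.univ.erase ℓ₀, ‖dirich m (t ℓ)‖
      ≤ (((m : ℝ) + 1) * (2 * wrap (t ℓ₀)))⁻¹ * 1 := by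
        refine mul_le_mul (norm_dirich_le_inv_wrap m (hℓ₀ ▸ ht)) ?_
          (Finset.prod_nonneg fun _ _ => norm_nonneg _)
          (by have := wrap_nonneg (t ℓ₀); positivity)
        exact Finset.prod_le_one (fun _ _ => norm_nonneg _) fun _ _ => norm_dirich_le_one m _
    _ = _ := mul_one _

lemma exists_dirich_sub_eq_eval (m : ℕ) (s : ℝ) :
    ∃ q : ℂ[X], q.natDegree ≤ m ∧
      ∀ t : ℝ, dirich m (t - s) = q.eval (Complex.exp (2 * π * Complex.I * t)) := by
  set w := Complex.exp (-(2 * π * Complex.I * s))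
  refine ⟨C ((m : ℂ) + 1)⁻¹ * ∑ k ∈ Finset.range (m + 1), C (w ^ k) * X ^ k, ?_, fun t => ?_⟩
  · refine natDegree_C_mul_le _ _ |>.trans <| natDegree_sum_le_of_forall_le _ _ fun k hk => ?_
    exact natDegree_C_mul_X_pow_le _ _ |>.trans (Nat.lt_succ_iff.mp (Finset.mem_range.mp hk))
  · have hsplit : Complex.exp (2 * π * Complex.I * ((t - s : ℝ) : ℂ))
        = w * Complex.exp (2 * π * Complex.I * t) := by
      rw [← Complex.exp_add]; push_cast; ring_nf
    rw [dirich_eq_geom_sum, hsplit]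
    simp [eval_finsetSum, mul_pow]

lemma eval_eq_sum_fin {p : ℂ[X]} {D : ℕ} (hp : p.natDegree ≤ D) (z : ℂ) :
    p.eval z = ∑ i : Fin (D + 1), p.coeff i * z ^ (i : ℕ) := by
  rw [eval_eq_sum_range' (Nat.lt_succ_of_le hp), Finset.sum_range fun i => p.coeff i * z ^ i]

lemma exists_prod_eval_cexp_eq_sum {ι : Type*} [Fintype ι] [DecidableEq ι] {D : ℕ} (q : ι → ℂ[X])
    (hq : ∀ ℓ, (q ℓ).natDegree ≤ D) :
    ∃ g : (ι → Fin (D + 1)) → ℂ, ∀ t : ι → ℝ,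
      ∏ ℓ, (q ℓ).eval (Complex.exp (2 * π * Complex.I * t ℓ))
        = ∑ α, g α * Complex.exp (2 * π * Complex.I
            * ((∑ ℓ, ((α ℓ : ℕ) : ℝ) * t ℓ : ℝ) : ℂ)) := by
  classical
  refine ⟨fun α => ∏ ℓ, (q ℓ).coeff (α ℓ), fun t => ?_⟩
  simp_rw [eval_eq_sum_fin (hq _), Finset.prod_univ_sum, Fintype.piFinset_univ,
    Finset.prod_mul_distrib]
  refine Finset.sum_congr rfl fun α _ => congrArg _ ?_
  rw [← Finset.prod_congr rfl fun ℓ _ => Complex.exp_nat_mul _ (α ℓ), ← Complex.exp_sum]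
  push_cast
  rw [Finset.mul_sum]
  exact congrArg _ (Finset.sum_congr rfl fun ℓ _ => by ring)

lemma exists_prod_dirich_pow_eq_sum {ι : Type*} [Fintype ι] [DecidableEq ι] (m β : ℕ) (s : ι → ℝ) :
    ∃ g : (ι → Fin (m * β + 1)) → ℂ, ∀ t : ι → ℝ,
      (∏ ℓ, dirich m (t ℓ - s ℓ)) ^ β
        = ∑ α, g α * Complex.exp (2 * π * Complex.I
            * ((∑ ℓ, ((α ℓ : ℕ) : ℝ) * t ℓ : ℝ) : ℂ)) := by
  choose q hdeg heval using fun ℓ => exists_dirich_sub_eq_eval m (s ℓ)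
  obtain ⟨g, hg⟩ := exists_prod_eval_cexp_eq_sum (fun ℓ => q ℓ ^ β)
    fun ℓ => (natDegree_pow_le_of_le β (hdeg ℓ)).trans_eq (mul_comm β m)
  refine ⟨g, fun t => ?_⟩
  simp only [← hg, eval_pow, ← heval, Finset.prod_pow]

theorem stmt19_general (d lam β n : ℕ) (hlam : 0 < lam)
    (hβpos : 0 < β) (tj : Fin d → ℝ) :
    (∃ g : (Fin d → Fin (n / (lam * β) * β + 1)) → ℂ, ∀ t : Fin d → ℝ,
        (∏ ℓ, dirich (n / (lam * β)) (t ℓ - tj ℓ)) ^ β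
          = ∑ α, g α * Complex.exp (2 * π * Complex.I
              * ((∑ ℓ, ((α ℓ : ℕ) : ℝ) * t ℓ : ℝ) : ℂ))) ∧
    ((n / (lam * β) * β : ℕ) : ℝ) ≤ (n : ℝ) / lam ∧
    (∏ ℓ, dirich (n / (lam * β)) (tj ℓ - tj ℓ)) ^ β = 1 ∧
    (∀ t : Fin d → ℝ, (⨆ ℓ, wrap (t ℓ - tj ℓ)) ≠ 0 →
      ‖(∏ ℓ, dirich (n / (lam * β)) (t ℓ - tj ℓ)) ^ β‖
        ≤ ((lam : ℝ) * β / (2 * ((n : ℝ) + 1) * ⨆ ℓ, wrap (t ℓ - tj ℓ))) ^ β) := by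
  set P := n / (lam * β)
  have hlamβ : 0 < (lam : ℝ) * β := by positivity
  have hN : (n : ℝ) + 1 ≤ lam * β * (P + 1) := by
    exact_mod_cast Nat.lt_mul_div_succ n (Nat.mul_pos hlam hβpos)
  refine ⟨exists_prod_dirich_pow_eq_sum P β tj, ?_, by simp [dirich_zero], fun t ht => ?_⟩
  · calc ((P * β : ℕ) : ℝ) ≤ ((n / lam : ℕ) : ℝ) := by
          rw [show P = n / lam / β from (Nat.div_div_eq_div_mul _ _ _).symm]
          exact_mod_cast Nat.div_mul_le_self _ _
      _ ≤ n / lam := Nat.cast_div_le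
  · set W := ⨆ ℓ, wrap (t ℓ - tj ℓ)
    have hW : 0 < W := (Real.iSup_nonneg fun ℓ => wrap_nonneg _).lt_of_ne' ht
    rw [norm_pow]
    gcongr
    calc ‖∏ ℓ, dirich P (t ℓ - tj ℓ)‖ ≤ ((P + 1) * (2 * W))⁻¹ := norm_prod_dirich_le P hW
      _ ≤ (2 * (n + 1) * W / (lam * β))⁻¹ := by
          gcongr
          rw [div_le_iff₀ hlamβ]
          nlinarith
      _ = lam * β / (2 * (n + 1) * W) := inv_div _ _

theorem stmt19 (d lam β n : ℕ) (hd : 0 < d) (hlam : 0 < lam) (hβeven : Even β)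
    (hβpos : 0 < β) (hn : 2 * β ^ 2 * lam ≤ n) (tj : Fin d → ℝ) :
    (∃ g : (Fin d → Fin (n / (lam * β) * β + 1)) → ℂ, ∀ t : Fin d → ℝ,
        (∏ ℓ, dirich (n / (lam * β)) (t ℓ - tj ℓ)) ^ β
          = ∑ α, g α * Complex.exp (2 * π * Complex.I
              * ((∑ ℓ, ((α ℓ : ℕ) : ℝ) * t ℓ : ℝ) : ℂ))) ∧
    ((n / (lam * β) * β : ℕ) : ℝ) ≤ (n : ℝ) / lam ∧
    (∏ ℓ, dirich (n / (lam * β)) (tj ℓ - tj ℓ)) ^ β = 1 ∧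
    (∀ t : Fin d → ℝ, (⨆ ℓ, wrap (t ℓ - tj ℓ)) ≠ 0 →
      ‖(∏ ℓ, dirich (n / (lam * β)) (t ℓ - tj ℓ)) ^ β‖
        ≤ ((lam : ℝ) * β / (2 * ((n : ℝ) + 1) * ⨆ ℓ, wrap (t ℓ - tj ℓ))) ^ β) :=
  stmt19_general d lam β n hlam hβpos tj
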